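/- arXiv:2602.07607 — 2 statements merged into one kernel-verified Lean document; each statement's English description precedes it below -/
import Mathlib

section
/- For every k-regular finite simple graph G with k ≥ 1, there exists an edge labeling φ : E(G) → Fin (2k(k−1)+1) such that any two distinct edges lying on a common path of length at most 3 in G receive distinct labels. -/
/-!
Two distinct edges on a common path of length at most 3 either share an endpoint or are joined
by an edge, i.e. they are adjacent in the square of the line graph. If all degrees are at most `Δ`,
every edge `uv` has at most `2Δ(Δ - 1)` neighbours there, since each of them is incident to a
neighbour of `u` other than `v` or to a neighbour of `v` other than `u`. A greedy colouring of the
square of the line graph with `2Δ(Δ - 1) + 1` colours is then the required labeling.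
-/

open Finset

namespace SimpleGraph

variable {V : Type*}

theorem colorable_of_forall_degree_le [Fintype V] (G : SimpleGraph V) [G.LocallyFinite] {M : ℕ}
    (h : ∀ v, G.degree v ≤ M) : G.Colorable (M + 1) := by
  classical
  suffices ∀ s : Finset V, ∃ c : V → Fin (M + 1), ∀ a ∈ s, ∀ b ∈ s, G.Adj a b → c a ≠ c b by
    obtain ⟨c, hc⟩ := this univ
    exact ⟨Coloring.mk c fun hab => hc _ (mem_univ _) _ (mem_univ _) hab⟩
  intro s
  induction s using Finset.induction_on with
  | empty => exact ⟨fun _ => 0, by simp⟩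
  | insert a s ha ih =>
    obtain ⟨c, hc⟩ := ih
    obtain ⟨x, hx⟩ : ∃ x : Fin (M + 1), x ∉ (G.neighborFinset a).image c := by
      by_contra! hall
      have := calc M + 1 = #(univ : Finset (Fin (M + 1))) := by simp
        _ ≤ #((G.neighborFinset a).image c) := card_le_card fun x _ => hall x
        _ ≤ G.degree a := card_neighborFinset_eq_degree G a ▸ card_image_le
        _ ≤ M := h a
      omega
    have hnew : ∀ b, G.Adj a b → x ≠ c b := fun b hab hxb =>
      hx (mem_image.2 ⟨b, (mem_neighborFinset G a b).2 hab, hxb.symm⟩)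
    refine ⟨Function.update c a x, ?_⟩
    simp only [mem_insert]
    rintro b (rfl | hb) d (rfl | hd) hbd
    · exact absurd hbd G.irrefl
    · simpa [Function.update_of_ne (G.ne_of_adj hbd).symm] using hnew d hbd
    · simpa [Function.update_of_ne (G.ne_of_adj hbd)] using (hnew b hbd.symm).symm
    · simpa [Function.update_of_ne (ne_of_mem_of_not_mem hb ha),
        Function.update_of_ne (ne_of_mem_of_not_mem hd ha)] using hc b hb d hd hbd

def lineGraphSquare (G : SimpleGraph V) : SimpleGraph (Sym2 V) where
  Adj e f := e ∈ G.edgeSet ∧ f ∈ G.edgeSet ∧ e ≠ f ∧ ∃ a ∈ e, ∃ b ∈ f, a = b ∨ G.Adj a b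
  symm := ⟨fun _ _ ⟨he, hf, hne, a, ha, b, hb, hab⟩ =>
    ⟨hf, he, hne.symm, b, hb, a, ha, hab.imp Eq.symm fun h => h.symm⟩⟩
  loopless := ⟨fun _ h => h.2.2.1 rfl⟩

theorem Walk.exists_eq_or_adj_of_mem_edges {G : SimpleGraph V} {u v : V} (p : G.Walk u v)
    (hp : p.length ≤ 3) {e f : Sym2 V} (he : e ∈ p.edges) (hf : f ∈ p.edges) :
    ∃ a ∈ e, ∃ b ∈ f, a = b ∨ G.Adj a b := by
  match p with
  | .nil => simp at he
  | .cons _ .nil => simp_all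
  | .cons _ (.cons _ .nil) =>
    simp only [edges_cons, edges_nil, List.mem_cons, List.not_mem_nil, or_false] at he hf
    rcases he with rfl | rfl <;> rcases hf with rfl | rfl <;> simp
  | .cons _ (.cons h (.cons _ .nil)) =>
    simp only [edges_cons, edges_nil, List.mem_cons, List.not_mem_nil, or_false] at he hf
    rcases he with rfl | rfl | rfl <;> rcases hf with rfl | rfl | rfl <;> simp [h, h.symm]
  | .cons _ (.cons _ (.cons _ (.cons _ _))) =>
    simp only [length_cons] at hp
    omega

theorem exists_adj_notMem_of_lineGraphSquare_adj {G : SimpleGraph V} {e f : Sym2 V}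
    (h : G.lineGraphSquare.Adj e f) : ∃ c ∈ f, c ∉ e ∧ ∃ x ∈ e, G.Adj x c := by
  obtain ⟨-, hf, hne, a, ha, b, hb, hab⟩ := h
  by_cases hfe : ∃ d ∈ f, d ∈ e
  · obtain ⟨d, hdf, hde⟩ := hfe
    obtain ⟨c, rfl⟩ := Sym2.mem_iff_exists.1 hdf
    have hdc : G.Adj d c := hf
    refine ⟨c, Sym2.mem_mk_right d c, fun hce => hne ?_, d, hde, hdc⟩
    exact (Sym2.mem_and_mem_iff hdc.ne).1 ⟨hde, hce⟩
  · push Not at hfe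
    have hbe := hfe b hb
    exact ⟨b, hb, hbe, a, ha, hab.resolve_left fun hab => hbe (hab ▸ ha)⟩

theorem degree_lineGraphSquare_le [DecidableEq V] (G : SimpleGraph V) [G.LocallyFinite] {Δ : ℕ}
    (h : ∀ v, G.degree v ≤ Δ) (e : Sym2 V) [Fintype (G.lineGraphSquare.neighborSet e)] :
    G.lineGraphSquare.degree e ≤ 2 * Δ * (Δ - 1) := by
  -- the `Fintype` instance mentions `e`, so it has to move along with `e` into the induction
  revert ‹Fintype (G.lineGraphSquare.neighborSet e)›
  induction e with | _ u v =>
  intro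
  by_cases huv : G.Adj u v
  swap
  · have : G.lineGraphSquare.neighborFinset s(u, v) = ∅ :=
      eq_empty_of_forall_notMem fun f hf => huv ((G.lineGraphSquare.mem_neighborFinset _ _).1 hf).1
    rw [← card_neighborFinset_eq_degree, this, card_empty]
    exact Nat.zero_le _
  set S := (G.neighborFinset u).erase v ∪ (G.neighborFinset v).erase u
  have hS : #S ≤ 2 * (Δ - 1) := calc
    #S ≤ #((G.neighborFinset u).erase v) + #((G.neighborFinset v).erase u) := card_union_le _ _
    _ = (G.degree u - 1) + (G.degree v - 1) := by
      rw [card_erase_of_mem ((G.mem_neighborFinset u v).2 huv),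
        card_erase_of_mem ((G.mem_neighborFinset v u).2 huv.symm),
        card_neighborFinset_eq_degree, card_neighborFinset_eq_degree]
    _ ≤ 2 * (Δ - 1) := by have := h u; have := h v; omega
  have hsub :
      G.lineGraphSquare.neighborFinset s(u, v) ⊆ S.biUnion fun c => G.incidenceFinset c := by
    intro f hf
    have hadj := (G.lineGraphSquare.mem_neighborFinset _ _).1 hf
    obtain ⟨c, hcf, hce, x, hx, hxc⟩ := exists_adj_notMem_of_lineGraphSquare_adj hadj
    have hcu : c ≠ u := fun hcu => hce (hcu ▸ Sym2.mem_mk_left u v)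
    have hcv : c ≠ v := fun hcv => hce (hcv ▸ Sym2.mem_mk_right u v)
    refine mem_biUnion.2 ⟨c, ?_, (G.mem_incidenceFinset c f).2 ⟨hadj.2.1, hcf⟩⟩
    rcases Sym2.mem_iff.1 hx with rfl | rfl
    · exact mem_union_left _ (mem_erase.2 ⟨hcv, (G.mem_neighborFinset _ _).2 hxc⟩)
    · exact mem_union_right _ (mem_erase.2 ⟨hcu, (G.mem_neighborFinset _ _).2 hxc⟩)
  calc G.lineGraphSquare.degree s(u, v)
      = #(G.lineGraphSquare.neighborFinset s(u, v)) := (card_neighborFinset_eq_degree _ _).symm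
    _ ≤ #(S.biUnion fun c => G.incidenceFinset c) := card_le_card hsub
    _ ≤ #S * Δ := card_biUnion_le_card_mul _ _ _ fun c _ =>
        (G.card_incidenceFinset_eq_degree c).trans_le (h c)
    _ ≤ 2 * (Δ - 1) * Δ := Nat.mul_le_mul_right _ hS
    _ = 2 * Δ * (Δ - 1) := by ring

end SimpleGraph

theorem stmt4_general {V : Type*} [Fintype V] (G : SimpleGraph V) [DecidableRel G.Adj]
    (k : ℕ) (hreg : G.IsRegularOfDegree k) :
    ∃ φ : Sym2 V → Fin (2 * k * (k - 1) + 1),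
      ∀ e ∈ G.edgeSet, ∀ f ∈ G.edgeSet, e ≠ f →
        (∃ (u v : V) (p : G.Walk u v), p.IsPath ∧ p.length ≤ 3 ∧
          e ∈ p.edges ∧ f ∈ p.edges) → φ e ≠ φ f := by
  classical
  obtain ⟨C⟩ := G.lineGraphSquare.colorable_of_forall_degree_le
    fun e => G.degree_lineGraphSquare_le (fun v => (hreg v).le) e
  exact ⟨C, fun e he f hf hne ⟨_, _, p, _, hp, hep, hfp⟩ =>
    C.valid ⟨he, hf, hne, p.exists_eq_or_adj_of_mem_edges hp hep hfp⟩⟩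

theorem stmt4 {V : Type*} [Fintype V] (G : SimpleGraph V) [DecidableRel G.Adj]
    (k : ℕ) (hk : 1 ≤ k) (hreg : G.IsRegularOfDegree k) :
    ∃ φ : Sym2 V → Fin (2 * k * (k - 1) + 1),
      ∀ e ∈ G.edgeSet, ∀ f ∈ G.edgeSet, e ≠ f →
        (∃ (u v : V) (p : G.Walk u v), p.IsPath ∧ p.length ≤ 3 ∧
          e ∈ p.edges ∧ f ∈ p.edges) → φ e ≠ φ f :=
  stmt4_general G k hreg
end

section
/- Every finite simple graph with n vertices and m edges contains an independent set of size at least n² / (n + 2m) (equivalently, at least ⌈n²/(n+2m)⌉ when n ≥ 1). -/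
/-!
Let `k` be the independence number of `G`. Then the complement `Gᶜ` has no clique on `k + 1`
vertices, so by Turán's theorem it has at most `(1 - 1/k) n² / 2` edges. Since `G` and `Gᶜ`
together have `n(n-1)/2` edges, `G` has at least `n² / (2k) - n / 2` edges, i.e.
`n² ≤ (n + 2m) k`.
-/

open Finset Fintype

namespace SimpleGraph

theorem cliqueFree_compl_indepNum_succ {V : Type*} [Finite V] (G : SimpleGraph V) :
    Gᶜ.CliqueFree (G.indepNum + 1) := fun s hs => by
  have := ((isNClique_compl G).1 hs).isIndepSet.card_le_indepNum
  rw [hs.card_eq] at this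
  omega

variable {V : Type*} [Fintype V] {G : SimpleGraph V} [DecidableRel G.Adj]

theorem card_edgeFinset_add_card_edgeFinset_compl [DecidableEq V] :
    #G.edgeFinset + #Gᶜ.edgeFinset = (card V).choose 2 := by
  rw [← card_union_of_disjoint (disjoint_edgeFinset.2 disjoint_compl_right), ← edgeFinset_sup,
    ← card_edgeFinset_top_eq_card_choose_two]
  congr! 2
  exact sup_compl_eq_top

/-- Turán's bound `2 r m ≤ (r - 1) n²`, rearranged to avoid truncated subtraction so that it
also holds for `r = 0`. -/
theorem CliqueFree.mul_two_mul_card_edgeFinset_add_sq_le {r : ℕ} (h : G.CliqueFree (r + 1)) :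
    r * (2 * #G.edgeFinset) + card V ^ 2 ≤ r * card V ^ 2 := by
  rcases r.eq_zero_or_pos with rfl | hr
  · rw [zero_add, cliqueFree_one, ← card_eq_zero_iff] at h
    simp [h]
  obtain ⟨H, _, hH⟩ := exists_isTuranMaximal (V := V) hr
  have hG : #G.edgeFinset ≤ #(turanGraph (card V) r).edgeFinset :=
    (hH.2 h).trans hH.nonempty_iso_turanGraph.some.card_edgeFinset_eq.le
  have hturan := mul_card_edgeFinset_turanGraph_le (n := card V) (r := r)
  obtain ⟨r, rfl⟩ := Nat.exists_eq_add_of_lt hr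
  simp only [zero_add, Nat.add_sub_cancel] at hturan
  nlinarith

end SimpleGraph

theorem stmt5_general {V : Type*} [Fintype V] (G : SimpleGraph V)
    [DecidableRel G.Adj] :
    ∃ s : Finset V, (∀ v ∈ s, ∀ w ∈ s, v ≠ w → ¬ G.Adj v w) ∧
      (Fintype.card V) ^ 2 ≤ (Fintype.card V + 2 * G.edgeFinset.card) * s.card := by
  classical
  obtain ⟨s, hs⟩ := G.exists_isNIndepSet_indepNum
  refine ⟨s, fun v hv w hw hvw => hs.isIndepSet hv hw hvw, ?_⟩
  have hturan := G.cliqueFree_compl_indepNum_succ.mul_two_mul_card_edgeFinset_add_sq_le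
  have hedges := SimpleGraph.card_edgeFinset_add_card_edgeFinset_compl (G := G)
  have hpairs : 2 * (Fintype.card V).choose 2 + Fintype.card V = Fintype.card V ^ 2 := by
    rw [Nat.choose_two_right, Nat.mul_div_cancel' (Nat.even_mul_pred_self _).two_dvd]
    cases Fintype.card V <;> simp [sq, Nat.mul_succ]
  rw [hs.card_eq]
  nlinarith

theorem stmt5 {V : Type*} [Fintype V] [DecidableEq V] (G : SimpleGraph V)
    [DecidableRel G.Adj] (hn : 1 ≤ Fintype.card V) :
    ∃ s : Finset V, (∀ v ∈ s, ∀ w ∈ s, v ≠ w → ¬ G.Adj v w) ∧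
      (Fintype.card V) ^ 2 ≤ (Fintype.card V + 2 * G.edgeFinset.card) * s.card :=
  stmt5_general G
end
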